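/- arXiv:2010.14499 — 3 statements merged into one kernel-verified Lean document; each statement's English description precedes it below -/
import Mathlib

section
/- (Closed form of the least-squares solution in the Appendix Lemma.) In the linear-ensemble setup, assume additionally α > 0 and σ_j² > 0 for all j, and set T = ∑_{j=1}^{k} σ_j^{−2}. Then the vector w* ∈ ℝ^k defined by w*_j = α ‖y‖² σ_j^{−2} / (1 + α² ‖y‖² T) is the unique global minimizer of the function w ↦ ‖∑_{j=1}^{k} w_j φ_j − y‖², and every coordinate of w* is positive. -/
open scoped RealInnerProductSpace

/-!
The loss is `‖A w - y‖²` for the linear map `A w = ∑ⱼ wⱼ φⱼ`. The Gram matrix of the features is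
`⟪φᵢ, φⱼ⟫ = α² ‖y‖² + δᵢⱼ σⱼ²`, so the normal equations `⟪A w - y, φⱼ⟫ = 0` read
`α² ‖y‖² ∑ᵢ wᵢ + wⱼ σⱼ² = α ‖y‖²`, and `w*` solves them. By Pythagoras
`‖A w - y‖² = ‖A w* - y‖² + ‖A (w - w*)‖²`, and `A` is injective because
`‖A d‖² = α² ‖y‖² (∑ⱼ dⱼ)² + ∑ⱼ dⱼ² σⱼ²` with all `σⱼ² > 0`.
-/

open Finset

variable {E ι : Type*} [NormedAddCommGroup E] [InnerProductSpace ℝ E] [Fintype ι]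

theorem norm_sum_smul_sub_sq_eq_of_inner_eq_zero (φ : ι → E) (y : E) (w₀ w : ι → ℝ)
    (hw₀ : ∀ j, ⟪∑ i, w₀ i • φ i - y, φ j⟫ = 0) :
    ‖∑ i, w i • φ i - y‖ ^ 2 = ‖∑ i, w₀ i • φ i - y‖ ^ 2 + ‖∑ i, (w - w₀) i • φ i‖ ^ 2 := by
  have hsplit : ∑ i, w i • φ i - y = (∑ i, w₀ i • φ i - y) + ∑ i, (w - w₀) i • φ i := by
    simp only [Pi.sub_apply, sub_smul, sum_sub_distrib]
    abel
  have horth : ⟪∑ i, w₀ i • φ i - y, ∑ i, (w - w₀) i • φ i⟫ = 0 := by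
    simp [inner_sum, real_inner_smul_right, hw₀]
  rw [hsplit, norm_add_sq_real, horth]
  ring

section Ensemble

variable (y : E) (α : ℝ) (ε : ι → E)

theorem inner_sum_smul_ensemble (hεy : ∀ j, ⟪ε j, y⟫ = 0)
    (hεε : ∀ i j, i ≠ j → ⟪ε i, ε j⟫ = 0) (w : ι → ℝ) (j : ι) :
    ⟪∑ i, w i • (α • y + ε i), α • y + ε j⟫ = α ^ 2 * ‖y‖ ^ 2 * ∑ i, w i + w j * ‖ε j‖ ^ 2 := by
  have hgram : ∀ i, ⟪α • y + ε i, α • y + ε j⟫ = α ^ 2 * ‖y‖ ^ 2 + ⟪ε i, ε j⟫ := fun i => by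
    simp only [inner_add_left, inner_add_right, real_inner_smul_left, real_inner_smul_right,
      real_inner_comm (ε j) y, hεy]
    rw [real_inner_self_eq_norm_sq]
    ring
  have hdiag : ∑ i, w i * ⟪ε i, ε j⟫ = w j * ‖ε j‖ ^ 2 := by
    rw [sum_eq_single j (fun i _ hij => by rw [hεε i j hij, mul_zero]) (by simp),
      real_inner_self_eq_norm_sq]
  simp only [sum_inner, real_inner_smul_left, hgram, mul_add, sum_add_distrib, hdiag,
    ← sum_mul]
  ring

theorem inner_sum_smul_ensemble_sub (hεy : ∀ j, ⟪ε j, y⟫ = 0)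
    (hεε : ∀ i j, i ≠ j → ⟪ε i, ε j⟫ = 0) (w : ι → ℝ) (j : ι) :
    ⟪∑ i, w i • (α • y + ε i) - y, α • y + ε j⟫
      = α ^ 2 * ‖y‖ ^ 2 * ∑ i, w i + w j * ‖ε j‖ ^ 2 - α * ‖y‖ ^ 2 := by
  rw [inner_sub_left, inner_sum_smul_ensemble y α ε hεy hεε, inner_add_right,
    real_inner_smul_right, real_inner_self_eq_norm_sq, real_inner_comm, hεy, add_zero]

theorem norm_sum_smul_ensemble_sq (hεy : ∀ j, ⟪ε j, y⟫ = 0)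
    (hεε : ∀ i j, i ≠ j → ⟪ε i, ε j⟫ = 0) (w : ι → ℝ) :
    ‖∑ i, w i • (α • y + ε i)‖ ^ 2
      = α ^ 2 * ‖y‖ ^ 2 * (∑ i, w i) ^ 2 + ∑ i, w i ^ 2 * ‖ε i‖ ^ 2 := by
  rw [← real_inner_self_eq_norm_sq]
  conv_lhs => rw [inner_sum]
  simp only [real_inner_smul_right, inner_sum_smul_ensemble y α ε hεy hεε, mul_add,
    sum_add_distrib, ← sum_mul]
  congr 1
  · ring
  · exact sum_congr rfl fun i _ => by ring

theorem norm_sum_smul_ensemble_sq_pos (hεy : ∀ j, ⟪ε j, y⟫ = 0)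
    (hεε : ∀ i j, i ≠ j → ⟪ε i, ε j⟫ = 0) (hσ : ∀ j, 0 < ‖ε j‖ ^ 2) {w : ι → ℝ} (hw : w ≠ 0) :
    0 < ‖∑ i, w i • (α • y + ε i)‖ ^ 2 := by
  obtain ⟨j, hj⟩ := Function.ne_iff.mp hw
  rw [norm_sum_smul_ensemble_sq y α ε hεy hεε]
  refine add_pos_of_nonneg_of_pos (by positivity) ?_
  exact sum_pos' (fun i _ => by positivity) ⟨j, mem_univ j, mul_pos (sq_pos_of_ne_zero hj) (hσ j)⟩

end Ensemble

/-- closed form of the least-squares solution in the Appendix Lemma: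
in the linear-ensemble setup with `α > 0` and `σ_j² = ‖ε_j‖² > 0`, the vector `w*` with
`w*_j = α ‖y‖² σ_j⁻² / (1 + α² ‖y‖² T)`, `T = ∑_j σ_j⁻²`, is the unique global minimizer
of `w ↦ ‖∑_j w_j φ_j − y‖²`, and every coordinate of `w*` is positive. -/
theorem linear_ensemble_least_squares_closed_form
    {n k : ℕ} (y : EuclideanSpace ℝ (Fin n)) (hy : y ≠ 0) (α : ℝ) (hα : 0 < α)
    (ε : Fin k → EuclideanSpace ℝ (Fin n))
    (hεy : ∀ j, ⟪ε j, y⟫ = 0)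
    (hεε : ∀ i j, i ≠ j → ⟪ε i, ε j⟫ = 0)
    (hσ : ∀ j, 0 < ‖ε j‖ ^ 2)
    (T : ℝ) (hT : T = ∑ j, (‖ε j‖ ^ 2)⁻¹)
    (wstar : Fin k → ℝ)
    (hwstar : ∀ j, wstar j = α * ‖y‖ ^ 2 * (‖ε j‖ ^ 2)⁻¹ / (1 + α ^ 2 * ‖y‖ ^ 2 * T)) :
    (∀ w : Fin k → ℝ, w ≠ wstar →
      ‖(∑ j, wstar j • (α • y + ε j)) - y‖ ^ 2 <
        ‖(∑ j, w j • (α • y + ε j)) - y‖ ^ 2) ∧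
    (∀ j, 0 < wstar j) := by
  have hT₀ : 0 ≤ T := hT ▸ sum_nonneg fun j _ => (inv_pos.mpr (hσ j)).le
  have hy₀ : 0 < ‖y‖ := norm_pos_iff.mpr hy
  set c := α * ‖y‖ ^ 2 / (1 + α ^ 2 * ‖y‖ ^ 2 * T) with hc
  have hwc : ∀ j, wstar j = c * (‖ε j‖ ^ 2)⁻¹ := fun j => by rw [hwstar, hc]; ring
  have hwσ : ∀ j, wstar j * ‖ε j‖ ^ 2 = c := fun j => by
    rw [hwc, mul_assoc, inv_mul_cancel₀ (hσ j).ne', mul_one]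
  have hsum : ∑ j, wstar j = c * T := by rw [hT, mul_sum]; exact sum_congr rfl fun j _ => hwc j
  have hnormal : ∀ j, ⟪∑ i, wstar i • (α • y + ε i) - y, α • y + ε j⟫ = 0 := fun j => by
    rw [inner_sum_smul_ensemble_sub y α ε hεy hεε, hsum, hwσ, hc]
    field_simp
    ring
  have hc₀ : 0 < c := by positivity
  refine ⟨fun w hw => ?_, fun j => hwc j ▸ mul_pos hc₀ (inv_pos.mpr (hσ j))⟩
  rw [norm_sum_smul_sub_sq_eq_of_inner_eq_zero _ y wstar w hnormal]
  exact lt_add_of_pos_right _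
    (norm_sum_smul_ensemble_sq_pos y α ε hεy hεε hσ (sub_ne_zero.mpr hw))
end

section
/- (Appendix Lemma, conclusion.) In the linear-ensemble setup, assume additionally α > 0 and σ_j² > 0 for all j, and let w* be the (unique) minimizer of w ↦ ‖∑_{j=1}^{k} w_j φ_j − y‖². Then for all indices i and l: w*_i ≥ w*_l if and only if σ_i² ≤ σ_l², which holds if and only if ‖φ_i − y‖² ≤ ‖φ_l − y‖². In particular, any index maximizing the least-squares weight w*_i is exactly an index minimizing the individual model error ‖φ_i − y‖². -/
/-!
Because the `ε_j` are orthogonal to `y` and to each other, the loss splits as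
`(α ∑ w − 1)² ‖y‖² + ∑ w_j² σ_j²`. Perturbing one coordinate of the minimizer gives the
first-order condition `w*_j σ_j² = α ‖y‖² (1 − α ∑ w*)`, a constant `c` independent of `j`,
and `c > 0`, for otherwise every `w*_j ≤ 0` and then `1 − α ∑ w* ≥ 1`. So `w*_j = c / σ_j²`
decreases in `σ_j²`, while `‖φ_j − y‖² = (α − 1)² ‖y‖² + σ_j²` increases in it.
-/

open scoped RealInnerProductSpace

open Finset

theorem Fintype.sum_apply_update {ι M : Type*} [Fintype ι] [DecidableEq ι] [AddCommGroup M]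
    (F : ι → ℝ → M) (w : ι → ℝ) (i : ι) (x : ℝ) :
    ∑ j, F j (Function.update w i x j) = ∑ j, F j (w j) + (F i x - F i (w i)) := by
  simp only [Function.apply_update F w i x]
  rw [sum_update_of_mem (mem_univ i),
    sum_eq_add_sum_sdiff_singleton_of_mem (mem_univ i) fun j => F j (w j)]
  abel

theorem eq_zero_of_forall_nonneg_quadratic {a b : ℝ} (h : ∀ x : ℝ, 0 ≤ a * (x * x) + b * x) :
    b = 0 := by
  have hdisc : discrim a b 0 ≤ 0 := discrim_le_zero fun x => by simpa using h x
  rw [discrim, mul_zero, sub_zero] at hdisc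
  exact pow_eq_zero_iff two_ne_zero |>.mp (le_antisymm hdisc (sq_nonneg b))

section

variable {E : Type*} [NormedAddCommGroup E] [InnerProductSpace ℝ E]

theorem norm_smul_add_sq_of_inner_eq_zero {e y : E} (h : ⟪e, y⟫ = 0) (c : ℝ) :
    ‖c • y + e‖ ^ 2 = c ^ 2 * ‖y‖ ^ 2 + ‖e‖ ^ 2 := by
  rw [norm_add_sq_real, real_inner_smul_left, real_inner_comm, h, norm_smul, mul_pow,
    Real.norm_eq_abs, sq_abs]
  ring

theorem norm_sum_smul_sq_of_pairwise_inner_eq_zero {ι : Type*} [Fintype ι] {ε : ι → E}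
    (h : Pairwise fun i j => ⟪ε i, ε j⟫ = 0) (w : ι → ℝ) :
    ‖∑ j, w j • ε j‖ ^ 2 = ∑ j, w j ^ 2 * ‖ε j‖ ^ 2 := by
  classical
  rw [← real_inner_self_eq_norm_sq, sum_inner]
  refine sum_congr rfl fun i _ => ?_
  have hcross : ∀ j ≠ i, ⟪w i • ε i, w j • ε j⟫ = 0 := fun j hji => by
    rw [real_inner_smul_left, real_inner_smul_right, h hji.symm, mul_zero, mul_zero]
  rw [inner_sum, sum_eq_single i (fun j _ => hcross j) (by simp), real_inner_smul_left,
    real_inner_smul_right, real_inner_self_eq_norm_sq]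
  ring

end

def ensembleLoss {ι : Type*} [Fintype ι] (α Y : ℝ) (s w : ι → ℝ) : ℝ :=
  (α * ∑ j, w j - 1) ^ 2 * Y + ∑ j, w j ^ 2 * s j

namespace ensembleLoss

variable {ι : Type*} [Fintype ι] {α Y : ℝ} {s w : ι → ℝ}

theorem update_add [DecidableEq ι] (i : ι) (u : ℝ) :
    ensembleLoss α Y s (Function.update w i (w i + u)) = ensembleLoss α Y s w +
      (α ^ 2 * Y + s i) * (u * u) + 2 * (w i * s i - α * Y * (1 - α * ∑ j, w j)) * u := by
  simp only [ensembleLoss, Fintype.sum_apply_update (fun _ x => x),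
    Fintype.sum_apply_update (fun j x => x ^ 2 * s j)]
  ring

theorem weight_mul_eq_of_forall_le (hmin : ∀ v, ensembleLoss α Y s w ≤ ensembleLoss α Y s v)
    (i : ι) : w i * s i = α * Y * (1 - α * ∑ j, w j) := by
  classical
  have hslope : 2 * (w i * s i - α * Y * (1 - α * ∑ j, w j)) = 0 :=
    eq_zero_of_forall_nonneg_quadratic (a := α ^ 2 * Y + s i) fun u => by
      have := hmin (Function.update w i (w i + u))
      rw [update_add] at this
      linarith
  linarith

theorem pos_of_weight_mul_eq (hα : 0 < α) (hY : 0 < Y) (hs : ∀ j, 0 < s j)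
    (hw : ∀ i, w i * s i = α * Y * (1 - α * ∑ j, w j)) : 0 < α * Y * (1 - α * ∑ j, w j) := by
  by_contra! hc
  have hnonpos : ∑ j, w j ≤ 0 := sum_nonpos fun j _ =>
    nonpos_of_mul_nonpos_left ((hw j).trans_le hc) (hs j)
  have hone : 1 ≤ 1 - α * ∑ j, w j := by linarith [mul_nonpos_of_nonneg_of_nonpos hα.le hnonpos]
  nlinarith [mul_pos hα hY]

theorem weight_le_weight_iff (hα : 0 < α) (hY : 0 < Y) (hs : ∀ j, 0 < s j)
    (hmin : ∀ v, ensembleLoss α Y s w ≤ ensembleLoss α Y s v) (i l : ι) :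
    w l ≤ w i ↔ s i ≤ s l := by
  have hw := weight_mul_eq_of_forall_le hmin
  have hc := pos_of_weight_mul_eq hα hY hs hw
  have hdiv : ∀ j, w j = α * Y * (1 - α * ∑ j, w j) / s j := fun j =>
    eq_div_of_mul_eq (hs j).ne' (hw j)
  rw [hdiv i, hdiv l, div_le_div_iff_of_pos_left hc (hs l) (hs i)]

end ensembleLoss

section

variable {E : Type*} [NormedAddCommGroup E] [InnerProductSpace ℝ E] (y : E) (α : ℝ)

theorem norm_smul_add_sub_sq {e : E} (h : ⟪e, y⟫ = 0) :
    ‖(α • y + e) - y‖ ^ 2 = (α - 1) ^ 2 * ‖y‖ ^ 2 + ‖e‖ ^ 2 := by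
  rw [← norm_smul_add_sq_of_inner_eq_zero h, sub_smul, one_smul, add_sub_right_comm]

theorem norm_sum_smul_smul_add_sub_sq {ι : Type*} [Fintype ι] {ε : ι → E}
    (hεy : ∀ j, ⟪ε j, y⟫ = 0) (hεε : Pairwise fun i j => ⟪ε i, ε j⟫ = 0) (w : ι → ℝ) :
    ‖(∑ j, w j • (α • y + ε j)) - y‖ ^ 2 = ensembleLoss α (‖y‖ ^ 2) (fun j => ‖ε j‖ ^ 2) w := by
  have hsplit : (∑ j, w j • (α • y + ε j)) - y = (α * ∑ j, w j - 1) • y + ∑ j, w j • ε j := by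
    rw [sub_smul, one_smul, mul_comm α, sum_mul, sum_smul]
    simp only [smul_add, sum_add_distrib, smul_smul]
    abel
  have horth : ⟪∑ j, w j • ε j, y⟫ = 0 := by
    simp only [sum_inner, real_inner_smul_left, hεy, mul_zero, sum_const_zero]
  rw [hsplit, norm_smul_add_sq_of_inner_eq_zero horth,
    norm_sum_smul_sq_of_pairwise_inner_eq_zero hεε, ensembleLoss]

end

/-- Appendix Lemma, conclusion: in the linear-ensemble setup with
`α > 0` and `σ_j² = ‖ε_j‖² > 0`, if `w*` minimizes `w ↦ ‖∑_j w_j φ_j − y‖²`, then for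
all indices `i, l`: `w*_i ≥ w*_l ↔ σ_i² ≤ σ_l² ↔ ‖φ_i − y‖² ≤ ‖φ_l − y‖²`. In
particular, an index maximizes the least-squares weight `w*` iff it minimizes the
individual model error `‖φ_i − y‖²`. -/
theorem linear_ensemble_max_weight_iff_min_error
    {n k : ℕ} (y : EuclideanSpace ℝ (Fin n)) (hy : y ≠ 0) (α : ℝ) (hα : 0 < α)
    (ε : Fin k → EuclideanSpace ℝ (Fin n))
    (hεy : ∀ j, ⟪ε j, y⟫ = 0)
    (hεε : ∀ i j, i ≠ j → ⟪ε i, ε j⟫ = 0)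
    (hσ : ∀ j, 0 < ‖ε j‖ ^ 2)
    (wstar : Fin k → ℝ)
    (hmin : ∀ w : Fin k → ℝ,
      ‖(∑ j, wstar j • (α • y + ε j)) - y‖ ^ 2 ≤ ‖(∑ j, w j • (α • y + ε j)) - y‖ ^ 2) :
    (∀ i l, ((wstar l ≤ wstar i ↔ ‖ε i‖ ^ 2 ≤ ‖ε l‖ ^ 2) ∧
      (‖ε i‖ ^ 2 ≤ ‖ε l‖ ^ 2 ↔
        ‖(α • y + ε i) - y‖ ^ 2 ≤ ‖(α • y + ε l) - y‖ ^ 2))) ∧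
    (∀ i, (∀ l, wstar l ≤ wstar i) ↔
      (∀ l, ‖(α • y + ε i) - y‖ ^ 2 ≤ ‖(α • y + ε l) - y‖ ^ 2)) := by
  simp only [norm_sum_smul_smul_add_sub_sq y α hεy hεε] at hmin
  have hweight := ensembleLoss.weight_le_weight_iff hα (by positivity) hσ hmin
  have herror : ∀ i l, ‖ε i‖ ^ 2 ≤ ‖ε l‖ ^ 2 ↔
      ‖(α • y + ε i) - y‖ ^ 2 ≤ ‖(α • y + ε l) - y‖ ^ 2 := fun i l => by
    rw [norm_smul_add_sub_sq y α (hεy i), norm_smul_add_sub_sq y α (hεy l), add_le_add_iff_left]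
  exact ⟨fun i l => ⟨hweight i l, herror i l⟩,
    fun i => forall_congr' fun l => (hweight i l).trans (herror i l)⟩
end

section
/- (Proposition 3.) In the noisy linear-ensemble setup, assume additionally α > 0 and s_j := σ_j² + E[‖ζ_j‖²] > 0 for all j, and set T = ∑_{j=1}^{k} s_j^{−1}. Then the function w ↦ E[‖∑_{j=1}^{k} w_j (φ_j + ζ_j) − y‖²] has a unique global minimizer w*, given by w*_j = α ‖y‖² s_j^{−1} / (1 + α² ‖y‖² T), and for all indices i and l: w*_i ≥ w*_l if and only if E[‖φ_i + ζ_i − y‖²] ≤ E[‖φ_l + ζ_l − y‖²]. In particular, any index maximizing the optimal ensemble weight w*_i is exactly an index minimizing the expected individual model error, i.e. maximizing the lower bound L(D | M_i) on the log marginal likelihood. -/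
/-!
Write `ξ_j = ε_j + ζ_j`. Since the `ζ_j` are centred, the `ξ_j` are uncorrelated with each other
and with `y`, and `E‖ξ_j‖² = s_j`. Hence the expected loss of the weights `w` is the quadratic
`R(w) = (α ∑ w_j - 1)² ‖y‖² + ∑ w_j² s_j`, and the error of model `i` alone is
`(α - 1)² ‖y‖² + s_i`. The optimal weights satisfy `w*_j s_j = const` and
`α ∑ w*_j - 1 = -1/(1 + α² ‖y‖² T)`, which makes the linear terms cancel in
`R(w) = R(w*) + α² ‖y‖² (∑ (w_j - w*_j))² + ∑ (w_j - w*_j)² s_j`.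
Finally `w*_j` is a positive multiple of `s_j⁻¹`, so larger weight means smaller `s_j`, which is
smaller individual error.
-/

open MeasureTheory Finset
open scoped RealInnerProductSpace

noncomputable section EnsembleRisk

variable {ι : Type*} [Fintype ι]

def ensembleRisk (α Y : ℝ) (s w : ι → ℝ) : ℝ :=
  (α * ∑ j, w j - 1) ^ 2 * Y + ∑ j, w j ^ 2 * s j

def optimalWeights (α Y : ℝ) (s : ι → ℝ) (j : ι) : ℝ :=
  α * Y * (s j)⁻¹ / (1 + α ^ 2 * Y * ∑ i, (s i)⁻¹)

variable {α Y : ℝ} {s : ι → ℝ} {j : ι}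

lemma one_add_mul_sum_inv_pos (hY : 0 ≤ Y) (hs : ∀ j, 0 < s j) :
    0 < 1 + α ^ 2 * Y * ∑ i, (s i)⁻¹ := by
  have : 0 ≤ ∑ i, (s i)⁻¹ := sum_nonneg fun i _ => (inv_pos.2 (hs i)).le
  positivity

lemma optimalWeights_eq_mul_inv :
    optimalWeights α Y s j = α * Y / (1 + α ^ 2 * Y * ∑ i, (s i)⁻¹) * (s j)⁻¹ := by
  rw [optimalWeights]; ring

lemma optimalWeights_mul_self (hs : s j ≠ 0) :
    optimalWeights α Y s j * s j = α * Y / (1 + α ^ 2 * Y * ∑ i, (s i)⁻¹) := by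
  rw [optimalWeights_eq_mul_inv, mul_assoc, inv_mul_cancel₀ hs, mul_one]

lemma mul_sum_optimalWeights_sub_one (hY : 0 ≤ Y) (hs : ∀ j, 0 < s j) :
    α * ∑ j, optimalWeights α Y s j - 1 = -(1 + α ^ 2 * Y * ∑ i, (s i)⁻¹)⁻¹ := by
  have hβ := (one_add_mul_sum_inv_pos (α := α) hY hs).ne'
  simp only [optimalWeights, ← sum_div, ← mul_sum]
  generalize ∑ i, (s i)⁻¹ = T at hβ ⊢
  field_simp
  ring

lemma ensembleRisk_eq_ensembleRisk_optimalWeights_add (hY : 0 ≤ Y) (hs : ∀ j, 0 < s j)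
    (w : ι → ℝ) :
    ensembleRisk α Y s w = ensembleRisk α Y s (optimalWeights α Y s) +
      α ^ 2 * Y * (∑ j, (w j - optimalWeights α Y s j)) ^ 2 +
      ∑ j, (w j - optimalWeights α Y s j) ^ 2 * s j := by
  set w' := optimalWeights α Y s
  have hsq : ∑ j, w j ^ 2 * s j = ∑ j, w' j ^ 2 * s j + ∑ j, (w j - w' j) ^ 2 * s j +
      2 * (α * Y / (1 + α ^ 2 * Y * ∑ i, (s i)⁻¹)) * ∑ j, (w j - w' j) := by
    rw [mul_sum, ← sum_add_distrib, ← sum_add_distrib]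
    refine sum_congr rfl fun j _ => ?_
    linear_combination (2 * (w j - w' j)) * optimalWeights_mul_self (α := α) (Y := Y) (hs j).ne'
  have hw : ∑ j, w j = ∑ j, (w j - w' j) + ∑ j, w' j := by
    rw [sum_sub_distrib]; ring
  rw [ensembleRisk, ensembleRisk, hsq, hw]
  linear_combination (2 * α * Y * ∑ j, (w j - w' j)) * mul_sum_optimalWeights_sub_one hY hs

lemma ensembleRisk_optimalWeights_lt (hY : 0 ≤ Y) (hs : ∀ j, 0 < s j) {w : ι → ℝ}
    (hw : w ≠ optimalWeights α Y s) :
    ensembleRisk α Y s (optimalWeights α Y s) < ensembleRisk α Y s w := by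
  obtain ⟨i, hi⟩ := Function.ne_iff.1 hw
  have hpos : 0 < ∑ j, (w j - optimalWeights α Y s j) ^ 2 * s j :=
    sum_pos' (fun j _ => mul_nonneg (sq_nonneg _) (hs j).le)
      ⟨i, mem_univ i, mul_pos (sq_pos_of_ne_zero (sub_ne_zero.2 hi)) (hs i)⟩
  rw [ensembleRisk_eq_ensembleRisk_optimalWeights_add hY hs w]
  have : 0 ≤ α ^ 2 * Y * (∑ j, (w j - optimalWeights α Y s j)) ^ 2 := by positivity
  linarith

lemma optimalWeights_le_optimalWeights_iff (hα : 0 < α) (hY : 0 < Y) (hs : ∀ j, 0 < s j)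
    (i l : ι) : optimalWeights α Y s l ≤ optimalWeights α Y s i ↔ s i ≤ s l := by
  have hc : 0 < α * Y / (1 + α ^ 2 * Y * ∑ i, (s i)⁻¹) :=
    div_pos (mul_pos hα hY) (one_add_mul_sum_inv_pos hY.le hs)
  rw [optimalWeights_eq_mul_inv, optimalWeights_eq_mul_inv, mul_le_mul_iff_right₀ hc,
    inv_le_inv₀ (hs l) (hs i)]

end EnsembleRisk

section SecondMoments

variable {Ω E : Type*} [MeasurableSpace Ω] {P : Measure Ω}
  [NormedAddCommGroup E] [InnerProductSpace ℝ E]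

theorem MeasureTheory.MemLp.integrable_inner {X Z : Ω → E} (hX : MemLp X 2 P)
    (hZ : MemLp Z 2 P) : Integrable (fun ω => ⟪X ω, Z ω⟫) P := by
  refine (L2.integrable_inner (𝕜 := ℝ) (hX.toLp X) (hZ.toLp Z)).congr ?_
  filter_upwards [hX.coeFn_toLp, hZ.coeFn_toLp] with ω hXω hZω
  rw [hXω, hZω]

lemma integral_norm_sum_smul_sq {ι : Type*} [Fintype ι] {ξ : ι → Ω → E}
    (hξ : ∀ i, MemLp (ξ i) 2 P) (huncorr : Pairwise fun i j => ∫ ω, ⟪ξ i ω, ξ j ω⟫ ∂P = 0)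
    (w : ι → ℝ) :
    ∫ ω, ‖∑ i, w i • ξ i ω‖ ^ 2 ∂P = ∑ i, w i ^ 2 * ∫ ω, ‖ξ i ω‖ ^ 2 ∂P := by
  have hint : ∀ i j, Integrable (fun ω => w i * w j * ⟪ξ i ω, ξ j ω⟫) P :=
    fun i j => ((hξ i).integrable_inner (hξ j)).const_mul _
  have hexpand : ∀ ω, ‖∑ i, w i • ξ i ω‖ ^ 2 = ∑ i, ∑ j, w i * w j * ⟪ξ i ω, ξ j ω⟫ := by
    intro ω
    simp only [← real_inner_self_eq_norm_sq, sum_inner, inner_sum, real_inner_smul_left,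
      real_inner_smul_right]
    exact sum_congr rfl fun i _ => sum_congr rfl fun j _ => by rw [real_inner_comm]; ring
  simp_rw [hexpand]
  rw [integral_finsetSum _ fun i _ => integrable_finsetSum _ fun j _ => hint i j]
  refine sum_congr rfl fun i _ => ?_
  rw [integral_finsetSum _ fun j _ => hint i j, Fintype.sum_eq_single i fun j hji => by
    rw [integral_const_mul, huncorr hji.symm, mul_zero]]
  simp_rw [integral_const_mul, real_inner_self_eq_norm_sq, sq]

variable [IsProbabilityMeasure P]

lemma integral_norm_add_sq_of_integral_inner_eq_zero (c : E) {X : Ω → E} (hX : MemLp X 2 P)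
    (horth : ∫ ω, ⟪c, X ω⟫ ∂P = 0) :
    ∫ ω, ‖c + X ω‖ ^ 2 ∂P = ‖c‖ ^ 2 + ∫ ω, ‖X ω‖ ^ 2 ∂P := by
  have hcX : Integrable (fun ω => 2 * ⟪c, X ω⟫) P :=
    ((hX.integrable one_le_two).const_inner c).const_mul 2
  have hrest : Integrable (fun ω => 2 * ⟪c, X ω⟫ + ‖X ω‖ ^ 2) P :=
    hcX.add hX.norm.integrable_sq
  simp_rw [norm_add_sq_real, add_assoc]
  rw [integral_add (integrable_const _) hrest, integral_const,
    integral_add hcX hX.norm.integrable_sq, integral_const_mul, horth]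
  simp

variable [CompleteSpace E]

lemma integral_inner_const_add (c a : E) {X : Ω → E} (hX : Integrable X P)
    (hX0 : ∫ ω, X ω ∂P = 0) : ∫ ω, ⟪c, a + X ω⟫ ∂P = ⟪c, a⟫ := by
  simp_rw [inner_add_right]
  rw [integral_add (integrable_const _) (hX.const_inner c), integral_const, integral_inner hX,
    hX0]
  simp

lemma integral_inner_const_add_const_add (a b : E) {X Z : Ω → E} (hX : MemLp X 2 P)
    (hZ : MemLp Z 2 P) (hX0 : ∫ ω, X ω ∂P = 0) (hZ0 : ∫ ω, Z ω ∂P = 0) :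
    ∫ ω, ⟪a + X ω, b + Z ω⟫ ∂P = ⟪a, b⟫ + ∫ ω, ⟪X ω, Z ω⟫ ∂P := by
  have hX1 := hX.integrable one_le_two
  have hZ1 := hZ.integrable one_le_two
  have haZ : Integrable (fun ω => ⟪a, b + Z ω⟫) P :=
    (integrable_const_add_iff.2 hZ1).const_inner a
  have hXb : ∫ ω, ⟪X ω, b⟫ ∂P = 0 := by
    simp_rw [real_inner_comm b, integral_inner hX1, hX0, inner_zero_right]
  have hrest : Integrable (fun ω => ⟪X ω, b⟫ + ⟪X ω, Z ω⟫) P :=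
    (hX1.inner_const b).add (hX.integrable_inner hZ)
  simp_rw [inner_add_left, inner_add_right (X _)]
  rw [integral_add haZ hrest, integral_add (hX1.inner_const b) (hX.integrable_inner hZ),
    integral_inner_const_add a b hZ1 hZ0, hXb, zero_add]

end SecondMoments

section EnsembleLoss

variable {Ω E ι : Type*} [MeasurableSpace Ω] {P : Measure Ω} [IsProbabilityMeasure P]
  [NormedAddCommGroup E] [InnerProductSpace ℝ E] [Fintype ι]

lemma integral_norm_sum_smul_sub_sq_eq_ensembleRisk (y : E) (α : ℝ) {ξ : ι → Ω → E}
    (hξ : ∀ i, MemLp (ξ i) 2 P) (huncorr : Pairwise fun i j => ∫ ω, ⟪ξ i ω, ξ j ω⟫ ∂P = 0)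
    (hξy : ∀ j, ∫ ω, ⟪y, ξ j ω⟫ ∂P = 0) (w : ι → ℝ) :
    ∫ ω, ‖∑ j, w j • (α • y + ξ j ω) - y‖ ^ 2 ∂P =
      ensembleRisk α (‖y‖ ^ 2) (fun j => ∫ ω, ‖ξ j ω‖ ^ 2 ∂P) w := by
  have hsplit : ∀ ω, ∑ j, w j • (α • y + ξ j ω) - y =
      (α * ∑ j, w j - 1) • y + ∑ j, w j • ξ j ω := by
    intro ω
    simp only [smul_add, sum_add_distrib, smul_smul, ← sum_smul, ← sum_mul]
    rw [mul_comm, sub_smul, one_smul]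
    abel
  have horth : ∫ ω, ⟪(α * ∑ j, w j - 1) • y, ∑ j, w j • ξ j ω⟫ ∂P = 0 := by
    simp_rw [real_inner_smul_left, inner_sum, real_inner_smul_right]
    rw [integral_const_mul, integral_finsetSum _ fun j _ =>
      (((hξ j).integrable one_le_two).const_inner y).const_mul _]
    simp [integral_const_mul, hξy]
  have hsum : MemLp (fun ω => ∑ j, w j • ξ j ω) 2 P :=
    memLp_finsetSum _ fun j _ => (hξ j).const_smul (w j)
  simp_rw [hsplit]
  rw [integral_norm_add_sq_of_integral_inner_eq_zero _ hsum horth,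
    integral_norm_sum_smul_sq hξ huncorr, norm_smul, mul_pow, Real.norm_eq_abs, sq_abs,
    ensembleRisk]

lemma integral_norm_smul_add_sub_sq (y : E) (α : ℝ) {X : Ω → E} (hX : MemLp X 2 P)
    (hXy : ∫ ω, ⟪y, X ω⟫ ∂P = 0) :
    ∫ ω, ‖α • y + X ω - y‖ ^ 2 ∂P = (α - 1) ^ 2 * ‖y‖ ^ 2 + ∫ ω, ‖X ω‖ ^ 2 ∂P := by
  have hsplit : ∀ ω, α • y + X ω - y = (α - 1) • y + X ω := fun ω => by
    rw [sub_smul, one_smul]; abel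
  have horth : ∫ ω, ⟪(α - 1) • y, X ω⟫ ∂P = 0 := by
    simp_rw [real_inner_smul_left]; rw [integral_const_mul, hXy, mul_zero]
  simp_rw [hsplit]
  rw [integral_norm_add_sq_of_integral_inner_eq_zero _ hX horth, norm_smul, mul_pow,
    Real.norm_eq_abs, sq_abs]

end EnsembleLoss

/-- Proposition 3: in the noisy linear-ensemble setup with `α > 0` and
`s_j = σ_j² + E[‖ζ_j‖²] > 0`, `T = ∑_j s_j⁻¹`, the expected squared loss
`w ↦ E[‖∑_j w_j (φ_j + ζ_j) − y‖²]` has a unique global minimizer `w*`, given by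
`w*_j = α ‖y‖² s_j⁻¹ / (1 + α² ‖y‖² T)`, and `w*_i ≥ w*_l` iff
`E[‖φ_i + ζ_i − y‖²] ≤ E[‖φ_l + ζ_l − y‖²]`: an index maximizes the optimal ensemble
weight iff it minimizes the expected individual model error (equivalently, maximizes the
lower bound `L(D | M_i)` on the log marginal likelihood). Here `φ_j = α • y + ε_j` and
`σ_j² = ‖ε_j‖²`. -/
theorem noisy_linear_ensemble_optimal_weights
    {n k : ℕ} {Ω : Type*} [MeasurableSpace Ω] (P : Measure Ω) [IsProbabilityMeasure P]
    (y : EuclideanSpace ℝ (Fin n)) (hy : y ≠ 0) (α : ℝ) (hα : 0 < α)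
    (ε : Fin k → EuclideanSpace ℝ (Fin n))
    (hεy : ∀ j, ⟪ε j, y⟫ = 0)
    (hεε : ∀ i j, i ≠ j → ⟪ε i, ε j⟫ = 0)
    (ζ : Fin k → Ω → EuclideanSpace ℝ (Fin n))
    (hζ : ∀ j, MemLp (ζ j) 2 P)
    (hζ0 : ∀ j, ∫ ω, ζ j ω ∂P = 0)
    (hζorth : ∀ i j, i ≠ j → ∫ ω, ⟪ζ i ω, ζ j ω⟫ ∂P = 0)
    (s : Fin k → ℝ) (hs : ∀ j, s j = ‖ε j‖ ^ 2 + ∫ ω, ‖ζ j ω‖ ^ 2 ∂P)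
    (hs_pos : ∀ j, 0 < s j)
    (T : ℝ) (hT : T = ∑ j, (s j)⁻¹)
    (wstar : Fin k → ℝ)
    (hwstar : ∀ j, wstar j = α * ‖y‖ ^ 2 * (s j)⁻¹ / (1 + α ^ 2 * ‖y‖ ^ 2 * T)) :
    (∀ w : Fin k → ℝ, w ≠ wstar →
      (∫ ω, ‖(∑ j, wstar j • ((α • y + ε j) + ζ j ω)) - y‖ ^ 2 ∂P) <
        ∫ ω, ‖(∑ j, w j • ((α • y + ε j) + ζ j ω)) - y‖ ^ 2 ∂P) ∧
    (∀ i l, wstar l ≤ wstar i ↔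
      (∫ ω, ‖(α • y + ε i) + ζ i ω - y‖ ^ 2 ∂P) ≤
        ∫ ω, ‖(α • y + ε l) + ζ l ω - y‖ ^ 2 ∂P) := by
  set ξ : Fin k → Ω → EuclideanSpace ℝ (Fin n) := fun j ω => ε j + ζ j ω
  have hξ : ∀ j, MemLp (ξ j) 2 P := fun j => (memLp_const (ε j)).add (hζ j)
  have hξy : ∀ j, ∫ ω, ⟪y, ξ j ω⟫ ∂P = 0 := fun j => by
    rw [integral_inner_const_add y _ ((hζ j).integrable one_le_two) (hζ0 j), real_inner_comm,
      hεy]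
  have hξξ : Pairwise fun i j => ∫ ω, ⟪ξ i ω, ξ j ω⟫ ∂P = 0 := fun i j hij => by
    change ∫ ω, ⟪ε i + ζ i ω, ε j + ζ j ω⟫ ∂P = 0
    rw [integral_inner_const_add_const_add _ _ (hζ i) (hζ j) (hζ0 i) (hζ0 j), hεε i j hij,
      hζorth i j hij, add_zero]
  have hξs : (fun j => ∫ ω, ‖ξ j ω‖ ^ 2 ∂P) = s := funext fun j => by
    rw [hs, integral_norm_add_sq_of_integral_inner_eq_zero _ (hζ j) <| by
      rw [integral_inner ((hζ j).integrable one_le_two), hζ0, inner_zero_right]]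
  have hw : wstar = optimalWeights α (‖y‖ ^ 2) s := funext fun j => by
    rw [hwstar, hT, optimalWeights]
  have hloss : ∀ w : Fin k → ℝ, ∫ ω, ‖(∑ j, w j • ((α • y + ε j) + ζ j ω)) - y‖ ^ 2 ∂P =
      ensembleRisk α (‖y‖ ^ 2) s w := fun w => by
    simp_rw [add_assoc]
    rw [← hξs, integral_norm_sum_smul_sub_sq_eq_ensembleRisk y α hξ hξξ hξy]
  have herr : ∀ i, ∫ ω, ‖(α • y + ε i) + ζ i ω - y‖ ^ 2 ∂P = (α - 1) ^ 2 * ‖y‖ ^ 2 + s i :=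
    fun i => by
      simp_rw [add_assoc]
      rw [integral_norm_smul_add_sub_sq y α (hξ i) (hξy i), ← hξs]
  have hY : 0 < ‖y‖ ^ 2 := by positivity
  refine ⟨fun w hne => ?_, fun i l => ?_⟩
  · rw [hloss, hloss, hw]
    exact ensembleRisk_optimalWeights_lt hY.le hs_pos (hw ▸ hne)
  · rw [herr, herr, add_le_add_iff_left, hw]
    exact optimalWeights_le_optimalWeights_iff hα hY hs_pos i l
end
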